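/- arXiv:2605.13468 — 3 statements merged into one kernel-verified Lean document; each statement's English description precedes it below -/
import Mathlib

section
/- For two labelled m-point configurations B = (b^(1),…,b^(m)) and C = (c^(1),…,c^(m)) in ([0,M]^2)^m, the absolute difference of their origin-anchored hypervolumes satisfies |HV(B) − HV(C)| ≤ M · Σ_{i=1}^m ‖b^(i) − c^(i)‖_1. -/
open MeasureTheory Set

def anchoredBox (p : ℝ × ℝ) : Set (ℝ × ℝ) := Icc 0 p.1 ×ˢ Icc 0 p.2

/-- Origin-anchored hypervolume of a labelled configuration of points in `ℝ²`. -/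
noncomputable def HVconf {m : ℕ} (B : Fin m → ℝ × ℝ) : ℝ :=
    (volume (⋃ i, anchoredBox (B i))).toReal

lemma vol_anchoredBox (p : ℝ × ℝ) :
    volume (anchoredBox p) = ENNReal.ofReal p.1 * ENNReal.ofReal p.2 := by
  rw [anchoredBox, Measure.volume_eq_prod, Measure.prod_prod, Real.volume_Icc, Real.volume_Icc,
    sub_zero, sub_zero]

lemma vol_union_ne_top {m : ℕ} (B : Fin m → ℝ × ℝ) :
    volume (⋃ i, anchoredBox (B i)) ≠ ⊤ := by
  refine ne_top_of_le_ne_top ?_ (measure_iUnion_le _)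
  rw [← lt_top_iff_ne_top]
  rw [tsum_fintype]
  refine ENNReal.sum_lt_top.2 fun i _ => ?_
  rw [vol_anchoredBox]
  exact ENNReal.mul_lt_top ENNReal.ofReal_lt_top ENNReal.ofReal_lt_top

lemma diff_bound {M : ℝ} (hM : 0 < M) (b c : ℝ × ℝ)
    (hb : b ∈ Icc (0 : ℝ) M ×ˢ Icc (0 : ℝ) M) :
    volume (anchoredBox b \ anchoredBox c)
      ≤ ENNReal.ofReal (M * (|b.1 - c.1| + |b.2 - c.2|)) := by
  obtain ⟨⟨hb1, hb1'⟩, ⟨hb2, hb2'⟩⟩ := hb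
  have hsub : anchoredBox b \ anchoredBox c ⊆
      (Icc (min c.1 b.1) b.1 ×ˢ Icc (0 : ℝ) b.2) ∪
      (Icc (0 : ℝ) b.1 ×ˢ Icc (min c.2 b.2) b.2) := by
    rintro ⟨x, y⟩ ⟨⟨⟨hx0, hx1⟩, ⟨hy0, hy1⟩⟩, hnc⟩
    simp only [anchoredBox, mem_prod, mem_Icc, not_and_or, not_le] at hnc
    rcases hnc with h | h
    · rcases h with h | h
      · exact absurd hx0 (not_le.2 h)
      · exact Or.inl ⟨⟨inf_le_left.trans h.le, hx1⟩, hy0, hy1⟩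
    · rcases h with h | h
      · exact absurd hy0 (not_le.2 h)
      · exact Or.inr ⟨⟨hx0, hx1⟩, inf_le_left.trans h.le, hy1⟩
  calc volume (anchoredBox b \ anchoredBox c)
      ≤ volume (Icc (min c.1 b.1) b.1 ×ˢ Icc (0 : ℝ) b.2) +
        volume (Icc (0 : ℝ) b.1 ×ˢ Icc (min c.2 b.2) b.2) :=
        (measure_mono hsub).trans (measure_union_le _ _)
    _ ≤ ENNReal.ofReal (M * |b.1 - c.1|) + ENNReal.ofReal (M * |b.2 - c.2|) := by
        gcongr
        · rw [Measure.volume_eq_prod, Measure.prod_prod, Real.volume_Icc, Real.volume_Icc, sub_zero,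
            ← ENNReal.ofReal_mul (sub_nonneg.2 (min_le_right _ _))]
          apply ENNReal.ofReal_le_ofReal
          have h1 : b.1 - min c.1 b.1 ≤ |b.1 - c.1| := by
            rcases min_cases c.1 b.1 with ⟨h, _⟩ | ⟨h, _⟩
            · rw [h]; exact le_abs_self _
            · rw [h]; simp [abs_nonneg]
          rw [mul_comm M]
          exact mul_le_mul h1 hb2' hb2 (abs_nonneg _)
        · rw [Measure.volume_eq_prod, Measure.prod_prod, Real.volume_Icc, Real.volume_Icc, sub_zero,
            ← ENNReal.ofReal_mul (by positivity)]
          apply ENNReal.ofReal_le_ofReal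
          have h1 : b.2 - min c.2 b.2 ≤ |b.2 - c.2| := by
            rcases min_cases c.2 b.2 with ⟨h, _⟩ | ⟨h, _⟩
            · rw [h]; exact le_abs_self _
            · rw [h]; simp [abs_nonneg]
          exact mul_le_mul hb1' h1 (sub_nonneg.2 (min_le_right _ _)) hM.le
    _ = ENNReal.ofReal (M * (|b.1 - c.1| + |b.2 - c.2|)) := by
        rw [mul_add, ENNReal.ofReal_add (by positivity) (by positivity)]

lemma hv_one_side {M : ℝ} (hM : 0 < M) {m : ℕ} (B C : Fin m → ℝ × ℝ)
    (hB : ∀ i, B i ∈ Icc (0 : ℝ) M ×ˢ Icc (0 : ℝ) M) :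
    HVconf B - HVconf C ≤ M * ∑ i, (|(B i).1 - (C i).1| + |(B i).2 - (C i).2|) := by
  set T : ℝ := M * ∑ i, (|(B i).1 - (C i).1| + |(B i).2 - (C i).2|) with hT
  have hT0 : 0 ≤ T := by positivity
  have hsub : (⋃ i, anchoredBox (B i)) ⊆
      (⋃ i, anchoredBox (C i)) ∪ ⋃ i, (anchoredBox (B i) \ anchoredBox (C i)) := by
    rintro x hx
    obtain ⟨i, hi⟩ := mem_iUnion.1 hx
    by_cases h : x ∈ ⋃ i, anchoredBox (C i)
    · exact Or.inl h
    · exact Or.inr (mem_iUnion.2 ⟨i, hi, fun hc => h (mem_iUnion.2 ⟨i, hc⟩)⟩)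
  have hD : volume (⋃ i, (anchoredBox (B i) \ anchoredBox (C i))) ≤ ENNReal.ofReal T := by
    refine (measure_iUnion_le _).trans ?_
    rw [tsum_fintype]
    calc ∑ i, volume (anchoredBox (B i) \ anchoredBox (C i))
        ≤ ∑ i, ENNReal.ofReal (M * (|(B i).1 - (C i).1| + |(B i).2 - (C i).2|)) := by
          exact Finset.sum_le_sum fun i _ => diff_bound hM _ _ (hB i)
      _ = ENNReal.ofReal T := by
          rw [hT, Finset.mul_sum, ← ENNReal.ofReal_sum_of_nonneg]
          intro i _; positivity
  have hle : volume (⋃ i, anchoredBox (B i)) ≤ volume (⋃ i, anchoredBox (C i)) +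
      ENNReal.ofReal T :=
    (measure_mono hsub).trans ((measure_union_le _ _).trans (by gcongr))
  have hfin : volume (⋃ i, anchoredBox (C i)) + ENNReal.ofReal T ≠ ⊤ :=
    ENNReal.add_ne_top.2 ⟨vol_union_ne_top C, ENNReal.ofReal_ne_top⟩
  have := ENNReal.toReal_mono hfin hle
  rw [ENNReal.toReal_add (vol_union_ne_top C) ENNReal.ofReal_ne_top,
    ENNReal.toReal_ofReal hT0] at this
  unfold HVconf
  linarith

theorem hv_lipschitz_labelled {M : ℝ} (hM : 0 < M) {m : ℕ} (B C : Fin m → ℝ × ℝ)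
    (hB : ∀ i, B i ∈ Icc (0 : ℝ) M ×ˢ Icc (0 : ℝ) M)
    (hC : ∀ i, C i ∈ Icc (0 : ℝ) M ×ˢ Icc (0 : ℝ) M) :
    |HVconf B - HVconf C| ≤ M * ∑ i, (|(B i).1 - (C i).1| + |(B i).2 - (C i).2|) := by
  rw [abs_sub_le_iff]
  constructor
  · exact hv_one_side hM B C hB
  · have := hv_one_side hM C B hC
    simpa [abs_sub_comm] using this
end

section
/- For two labelled m-point configurations B and C in ([0,M]^2)^m, the magnitude indicators satisfy |Mag(D(B)) − Mag(D(C))| ≤ (1/2 + M/4) · Σ_{i=1}^m ‖b^(i) − c^(i)‖_1. -/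
open MeasureTheory Set

/-- Magnitude indicator of the anchored dominated set of a labelled configuration:
`1 + (X + Y)/2 + HV/4` where `X`, `Y` are the coordinate maxima. -/
noncomputable def MagConf {m : ℕ} (B : Fin m → ℝ × ℝ) : ℝ :=
    1 + ((⨆ i, (B i).1) + (⨆ i, (B i).2)) / 2 + HVconf B / 4

lemma sup_sub_sup_le {m : ℕ} (hm : 0 < m) (f g : Fin m → ℝ) :
    (⨆ i, f i) - (⨆ i, g i) ≤ ∑ i, |f i - g i| := by
  have : Nonempty (Fin m) := ⟨⟨0, hm⟩⟩
  rw [sub_le_iff_le_add]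
  refine ciSup_le fun i => ?_
  have h1 : f i ≤ g i + |f i - g i| := by
    have := le_abs_self (f i - g i); linarith
  have h2 : g i ≤ ⨆ j, g j :=
    le_ciSup (Set.Finite.bddAbove (Set.finite_range g)) i
  have h3 : |f i - g i| ≤ ∑ j, |f j - g j| :=
    Finset.single_le_sum (f := fun j => |f j - g j|) (fun j _ => abs_nonneg _)
      (Finset.mem_univ i)
  linarith

lemma box_diff_subset (b c : ℝ × ℝ) (hb : b ∈ Icc (0:ℝ) M ×ˢ Icc (0:ℝ) M) :
    anchoredBox b \ anchoredBox c ⊆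
      (Icc c.1 b.1 ×ˢ Icc (0:ℝ) M) ∪ (Icc (0:ℝ) M ×ˢ Icc c.2 b.2) := by
  rintro ⟨x, y⟩ ⟨⟨⟨hx0, hx1⟩, hy0, hy1⟩, hne⟩
  obtain ⟨hbx, hby⟩ := hb
  have h : c.1 < x ∨ c.2 < y := by
    by_contra hcon
    push_neg at hcon
    exact hne ⟨⟨hx0, hcon.1⟩, hy0, hcon.2⟩
  rcases h with h | h
  · exact Or.inl ⟨⟨le_of_lt h, hx1⟩, hy0, le_trans hy1 hby.2⟩
  · exact Or.inr ⟨⟨hx0, le_trans hx1 hbx.2⟩, le_of_lt h, hy1⟩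

lemma box_diff_vol (hM : 0 < M) (b c : ℝ × ℝ)
    (hb : b ∈ Icc (0:ℝ) M ×ˢ Icc (0:ℝ) M) :
    volume (anchoredBox b \ anchoredBox c)
      ≤ ENNReal.ofReal (M * (|b.1 - c.1| + |b.2 - c.2|)) := by
  calc volume (anchoredBox b \ anchoredBox c)
      ≤ volume ((Icc c.1 b.1 ×ˢ Icc (0:ℝ) M) ∪ (Icc (0:ℝ) M ×ˢ Icc c.2 b.2)) :=
        measure_mono (box_diff_subset b c hb)
    _ ≤ volume (Icc c.1 b.1 ×ˢ Icc (0:ℝ) M) + volume (Icc (0:ℝ) M ×ˢ Icc c.2 b.2) :=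
        measure_union_le _ _
    _ = ENNReal.ofReal (b.1 - c.1) * ENNReal.ofReal (M - 0)
        + ENNReal.ofReal (M - 0) * ENNReal.ofReal (b.2 - c.2) := by
        rw [Measure.volume_eq_prod, Measure.prod_prod, Measure.prod_prod]
        simp [Real.volume_Icc]
    _ ≤ ENNReal.ofReal |b.1 - c.1| * ENNReal.ofReal M
        + ENNReal.ofReal M * ENNReal.ofReal |b.2 - c.2| := by
        gcongr <;> simp [le_abs_self]
    _ = ENNReal.ofReal (M * (|b.1 - c.1| + |b.2 - c.2|)) := by
        rw [← ENNReal.ofReal_mul (abs_nonneg _), ← ENNReal.ofReal_mul hM.le,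
          ← ENNReal.ofReal_add (by positivity) (by positivity)]
        ring_nf

lemma hv_sub_le (hM : 0 < M) {m : ℕ}
    (B C : Fin m → ℝ × ℝ)
    (hB : ∀ i, B i ∈ Icc (0 : ℝ) M ×ˢ Icc (0 : ℝ) M)
    (hC : ∀ i, C i ∈ Icc (0 : ℝ) M ×ˢ Icc (0 : ℝ) M) :
    HVconf B - HVconf C ≤ M * ∑ i, (|(B i).1 - (C i).1| + |(B i).2 - (C i).2|) := by
  set S : ℝ := ∑ i, (|(B i).1 - (C i).1| + |(B i).2 - (C i).2|) with hS
  have hSnn : 0 ≤ S := Finset.sum_nonneg fun i _ => by positivity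
  have hsub : (⋃ i, anchoredBox (B i)) ⊆
      (⋃ i, anchoredBox (C i)) ∪ ⋃ i, (anchoredBox (B i) \ anchoredBox (C i)) := by
    intro x hx
    obtain ⟨i, hi⟩ := mem_iUnion.1 hx
    by_cases h : x ∈ anchoredBox (C i)
    · exact Or.inl (mem_iUnion.2 ⟨i, h⟩)
    · exact Or.inr (mem_iUnion.2 ⟨i, hi, h⟩)
  have key : volume (⋃ i, anchoredBox (B i))
      ≤ volume (⋃ i, anchoredBox (C i)) + ENNReal.ofReal (M * S) := by
    calc volume (⋃ i, anchoredBox (B i))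
        ≤ volume ((⋃ i, anchoredBox (C i)) ∪ ⋃ i, (anchoredBox (B i) \ anchoredBox (C i))) :=
          measure_mono hsub
      _ ≤ volume (⋃ i, anchoredBox (C i))
          + volume (⋃ i, (anchoredBox (B i) \ anchoredBox (C i))) := measure_union_le _ _
      _ ≤ volume (⋃ i, anchoredBox (C i))
          + ∑ i, volume (anchoredBox (B i) \ anchoredBox (C i)) := by
          gcongr
          exact measure_iUnion_fintype_le _ _
      _ ≤ volume (⋃ i, anchoredBox (C i))
          + ∑ i, ENNReal.ofReal (M * (|(B i).1 - (C i).1| + |(B i).2 - (C i).2|)) := by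
          gcongr with i
          exact box_diff_vol hM _ _ (hB i)
      _ = volume (⋃ i, anchoredBox (C i)) + ENNReal.ofReal (M * S) := by
          rw [hS, Finset.mul_sum, ENNReal.ofReal_sum_of_nonneg]
          intro i _; positivity
  have hCfin : volume (⋃ i, anchoredBox (C i)) ≠ ⊤ := by
    have : (⋃ i, anchoredBox (C i)) ⊆ Icc (0:ℝ) M ×ˢ Icc (0:ℝ) M := by
      rintro ⟨x, y⟩ hx
      obtain ⟨i, ⟨hx0, hx1⟩, hy0, hy1⟩ := mem_iUnion.1 hx
      exact ⟨⟨hx0, hx1.trans (hC i).1.2⟩, hy0, hy1.trans (hC i).2.2⟩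
    refine ne_top_of_le_ne_top ?_ (measure_mono this)
    rw [Measure.volume_eq_prod, Measure.prod_prod]
    exact ENNReal.mul_ne_top (by simp [Real.volume_Icc]) (by simp [Real.volume_Icc])
  have hBfin : volume (⋃ i, anchoredBox (B i)) ≠ ⊤ :=
    ne_top_of_le_ne_top (by simp [hCfin]) key
  have := ENNReal.toReal_mono (by simp [hCfin]) key
  rw [ENNReal.toReal_add hCfin ENNReal.ofReal_ne_top, ENNReal.toReal_ofReal (by positivity)] at this
  simp only [HVconf]
  linarith

theorem mag_lipschitz_labelled {M : ℝ} (hM : 0 < M) {m : ℕ} (hm : 0 < m)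
    (B C : Fin m → ℝ × ℝ)
    (hB : ∀ i, B i ∈ Icc (0 : ℝ) M ×ˢ Icc (0 : ℝ) M)
    (hC : ∀ i, C i ∈ Icc (0 : ℝ) M ×ˢ Icc (0 : ℝ) M) :
    |MagConf B - MagConf C|
      ≤ (1 / 2 + M / 4) * ∑ i, (|(B i).1 - (C i).1| + |(B i).2 - (C i).2|) := by
  set S : ℝ := ∑ i, (|(B i).1 - (C i).1| + |(B i).2 - (C i).2|) with hS
  have hX1 : (⨆ i, (B i).1) - (⨆ i, (C i).1) ≤ ∑ i, |(B i).1 - (C i).1| :=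
    sup_sub_sup_le hm _ _
  have hX2 : (⨆ i, (C i).1) - (⨆ i, (B i).1) ≤ ∑ i, |(B i).1 - (C i).1| := by
    have := sup_sub_sup_le hm (fun i => (C i).1) (fun i => (B i).1)
    simpa [abs_sub_comm] using this
  have hY1 : (⨆ i, (B i).2) - (⨆ i, (C i).2) ≤ ∑ i, |(B i).2 - (C i).2| :=
    sup_sub_sup_le hm _ _
  have hY2 : (⨆ i, (C i).2) - (⨆ i, (B i).2) ≤ ∑ i, |(B i).2 - (C i).2| := by
    have := sup_sub_sup_le hm (fun i => (C i).2) (fun i => (B i).2)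
    simpa [abs_sub_comm] using this
  have hsplit : ∑ i, |(B i).1 - (C i).1| + ∑ i, |(B i).2 - (C i).2| = S := by
    rw [hS, ← Finset.sum_add_distrib]
  have hH1 : HVconf B - HVconf C ≤ M * S := hv_sub_le hM B C hB hC
  have hH2 : HVconf C - HVconf B ≤ M * S := by
    have := hv_sub_le hM C B hC hB
    rw [hS]
    simpa [abs_sub_comm] using this
  have h2nn : (0:ℝ) ≤ ∑ i, |(B i).2 - (C i).2| :=
    Finset.sum_nonneg fun i _ => abs_nonneg _
  have h1nn : (0:ℝ) ≤ ∑ i, |(B i).1 - (C i).1| :=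
    Finset.sum_nonneg fun i _ => abs_nonneg _
  rw [abs_le]
  constructor <;> · simp only [MagConf]; nlinarith
end

section
/- Let a = (1, 1/2) and for η ≥ 0 let b_η = (9/10, 1/2 + η). Define the layered hypervolume J(A) of a two-point set A with layer weight ε > 0: if one point strictly dominates the other (componentwise ≥ with at least one strict inequality), J = HV of the dominating singleton plus ε times HV of the dominated singleton; if neither dominates, J = HV of the pair. Then J({a, b_0}) = 1/2 + (9/20)ε, while lim_{η→0+} J({a, b_η}) = 1/2. Hence J is discontinuous at the configuration (a, b_0) for every ε > 0. -/
open MeasureTheory Set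
open scoped Classical

noncomputable def HV (B : Set (ℝ × ℝ)) : ℝ := (volume (⋃ b ∈ B, anchoredBox b)).toReal

/-- `p` strictly dominates `q` (maximization, componentwise). -/
def StrictDom (p q : ℝ × ℝ) : Prop := q.1 ≤ p.1 ∧ q.2 ≤ p.2 ∧ p ≠ q

/-- Layered hypervolume of a two-point configuration with layer weight `ε`. -/
noncomputable def layeredJ (ε : ℝ) (p q : ℝ × ℝ) : ℝ :=
  if StrictDom p q then HV {p} + ε * HV {q}
  else if StrictDom q p then HV {q} + ε * HV {p}
  else HV {p, q}

lemma vol_box (a b : ℝ) : volume (anchoredBox (a,b)) = ENNReal.ofReal a * ENNReal.ofReal b := by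
  rw [anchoredBox, Measure.volume_eq_prod, Measure.prod_prod, Real.volume_Icc, Real.volume_Icc,
    sub_zero, sub_zero]

lemma HV_singleton (a b : ℝ) (ha : 0 ≤ a) (hb : 0 ≤ b) : HV {(a,b)} = a * b := by
  rw [HV]
  simp only [mem_singleton_iff, iUnion_iUnion_eq_left]
  rw [vol_box, ENNReal.toReal_mul, ENNReal.toReal_ofReal ha, ENNReal.toReal_ofReal hb]

lemma vol_pair (η : ℝ) (hη : 0 ≤ η) :
    HV {((1:ℝ),(1/2:ℝ)), ((9/10:ℝ), 1/2 + η)} = 1/2 + (9/10) * η := by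
  have h1 : (⋃ b ∈ ({((1:ℝ),(1/2:ℝ)), ((9/10:ℝ), 1/2 + η)} : Set (ℝ×ℝ)), anchoredBox b)
      = anchoredBox (1, 1/2) ∪ anchoredBox (9/10, 1/2 + η) := by
    simp
  rw [HV, h1]
  have hinter : anchoredBox ((1:ℝ), (1/2:ℝ)) ∩ anchoredBox (9/10, 1/2 + η)
      = anchoredBox ((9/10:ℝ), (1/2:ℝ)) := by
    simp only [anchoredBox, Set.prod_inter_prod]
    congr 1 <;> rw [Icc_inter_Icc] <;> norm_num [hη]
  have hm : MeasurableSet (anchoredBox ((9/10:ℝ), 1/2 + η)) := by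
    rw [anchoredBox]; exact measurableSet_Icc.prod measurableSet_Icc
  have key := measure_union_add_inter (μ := volume) (anchoredBox ((1:ℝ),(1/2:ℝ))) hm
  rw [hinter, vol_box, vol_box, vol_box] at key
  have hu : volume (anchoredBox ((1:ℝ),(1/2:ℝ)) ∪ anchoredBox (9/10, 1/2 + η))
      = ENNReal.ofReal (1/2 + 9/10 * η) := by
    have hfin : ENNReal.ofReal (9/10 : ℝ) * ENNReal.ofReal (1/2 : ℝ) ≠ ⊤ := by
      finiteness
    rw [← ENNReal.add_left_inj hfin, key]
    have e1 : (1:ℝ) * (1/2) + (9/10) * (1/2 + η) = (1/2 + 9/10 * η) + (9/10) * (1/2) := by ring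
    rw [← ENNReal.ofReal_mul (by norm_num), ← ENNReal.ofReal_mul (by norm_num),
      ← ENNReal.ofReal_mul (by norm_num),
      ← ENNReal.ofReal_add (by norm_num) (by nlinarith), e1,
      ENNReal.ofReal_add (by nlinarith) (by norm_num)]
  rw [hu, ENNReal.toReal_ofReal (by nlinarith)]

lemma J_dom (ε : ℝ) : layeredJ ε (1, 1/2) (9/10, 1/2) = 1/2 + (9/20) * ε := by
  have hd : StrictDom (1, 1/2) ((9/10 : ℝ), (1/2 : ℝ)) := by
    refine ⟨by norm_num, le_refl _, ?_⟩
    intro h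
    have := congrArg Prod.fst h
    norm_num at this
  rw [layeredJ, if_pos hd, HV_singleton _ _ (by norm_num) (by norm_num),
    HV_singleton _ _ (by norm_num) (by norm_num)]
  ring

lemma J_eta (ε η : ℝ) (hη : 0 < η) :
    layeredJ ε (1, 1/2) (9/10, 1/2 + η) = 1/2 + (9/10) * η := by
  have h1 : ¬ StrictDom ((1:ℝ), (1/2:ℝ)) (9/10, 1/2 + η) := by
    rintro ⟨-, h, -⟩; simp only at h; linarith
  have h2 : ¬ StrictDom ((9/10:ℝ), (1/2 + η : ℝ)) (1, 1/2) := by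
    rintro ⟨h, -, -⟩; norm_num at h
  rw [layeredJ, if_neg h1, if_neg h2, vol_pair η hη.le]

theorem layered_hv_discontinuous (ε : ℝ) (hε : 0 < ε) :
    layeredJ ε (1, 1/2) (9/10, 1/2) = 1/2 + (9/20) * ε ∧
    Filter.Tendsto (fun η : ℝ => layeredJ ε (1, 1/2) (9/10, 1/2 + η))
      (nhdsWithin 0 (Set.Ioi 0)) (nhds (1/2)) ∧
    ¬ ContinuousAt (fun q : ℝ × ℝ => layeredJ ε (1, 1/2) q) (9/10, 1/2) := by
  have htend : Filter.Tendsto (fun η : ℝ => layeredJ ε (1, 1/2) (9/10, 1/2 + η))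
      (nhdsWithin 0 (Set.Ioi 0)) (nhds ((1:ℝ)/2)) := by
    have heq : (fun η : ℝ => (1/2 : ℝ) + (9/10) * η) =ᶠ[nhdsWithin 0 (Set.Ioi 0)]
        (fun η : ℝ => layeredJ ε (1, 1/2) (9/10, 1/2 + η)) := by
      filter_upwards [self_mem_nhdsWithin] with η hη
      exact (J_eta ε η hη).symm
    have hcont : Filter.Tendsto (fun η : ℝ => (1/2 : ℝ) + (9/10) * η)
        (nhdsWithin 0 (Set.Ioi 0)) (nhds ((1:ℝ)/2)) := by
      have h0 : Continuous (fun η : ℝ => (1/2 : ℝ) + (9/10) * η) := by continuity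
      have := (h0.tendsto 0).mono_left (nhdsWithin_le_nhds (s := Set.Ioi (0:ℝ)))
      simpa using this
    exact hcont.congr' heq
  refine ⟨J_dom ε, htend, fun hc => ?_⟩
  have hpath : Filter.Tendsto (fun η : ℝ => ((9/10 : ℝ), (1/2 + η : ℝ)))
      (nhdsWithin 0 (Set.Ioi 0)) (nhds ((9/10 : ℝ), (1/2 : ℝ))) := by
    have h0 : Continuous (fun η : ℝ => ((9/10 : ℝ), (1/2 + η : ℝ))) := by continuity
    have := (h0.tendsto 0).mono_left (nhdsWithin_le_nhds (s := Set.Ioi (0:ℝ)))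
    simpa using this
  have h2 := hc.tendsto.comp hpath
  have := tendsto_nhds_unique htend h2
  rw [J_dom ε] at this
  linarith
end
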